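/- Let n ≥ 3 and let f = (f_0, …, f_n) be given by f_k = a_0^{n−k} b_0^k + a_1^{n−k} b_1^k, where v_0 = (a_0, b_0) and v_1 = (a_1, b_1) are linearly independent vectors in ℂ². If a_0 a_1 + b_0 b_1 = 0 (i.e., θ(f) = 0), then there exist a matrix H ∈ O₂(ℂ), a nonzero k ∈ ℂ satisfying a_1 = k·b_0 and b_1 = −k·a_0, and a nonzero λ ∈ ℂ, such that for all 0 ≤ j ≤ n: (Hv_0)_0^{n−j}(Hv_0)_1^j + (Hv_1)_0^{n−j}(Hv_1)_1^j = λ·(1 + k^n·(−1)^j), i.e., H^{⊗n} f = λ·((1,1)^{⊗n} + k^n·(1,−1)^{⊗n}). -/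

import Mathlib

/-!
Write `s = a₀² + b₀²` and `D = a₁ b₀ − a₀ b₁`. Linear independence gives `D ≠ 0`, and the
identities `a₀ D = b₀ θ − b₁ s`, `b₀ D = a₁ s − a₀ θ` (with `θ = a₀ a₁ + b₀ b₁ = 0`) then force
`s ≠ 0` and `v₁ = k (b₀, −a₀)` with `k = D / s`. For `c² = 1 / (2 s)`, the matrix
`H = c [[a₀ + b₀, b₀ − a₀], [a₀ − b₀, a₀ + b₀]]` is orthogonal and sends `v₀` to `μ (1, 1)` and
`(b₀, −a₀)` to `μ (1, −1)`, where `μ = c s`; hence `H^{⊗n} f = μⁿ ((1,1)^{⊗n} + kⁿ (1,−1)^{⊗n})`.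
-/

open Matrix

theorem LinearIndependent.pair_prod_det_ne_zero {R : Type*} [CommRing R] [Nontrivial R]
    {a₀ b₀ a₁ b₁ : R} (hli : LinearIndependent R ![(a₀, b₀), (a₁, b₁)]) :
    a₁ * b₀ - a₀ * b₁ ≠ 0 := by
  intro hD
  have indep := LinearIndependent.pair_iff.mp hli
  obtain ⟨-, hb₀⟩ := indep b₁ (-b₀) <| by
    simp only [Prod.smul_mk, Prod.mk_add_mk, smul_eq_mul, Prod.mk_eq_zero]
    exact ⟨by linear_combination -hD, by ring⟩
  obtain ⟨-, ha₀⟩ := indep a₁ (-a₀) <| by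
    simp only [Prod.smul_mk, Prod.mk_add_mk, smul_eq_mul, Prod.mk_eq_zero]
    exact ⟨by ring, by linear_combination hD⟩
  exact one_ne_zero (indep 1 0 (by simp [neg_eq_zero.mp ha₀, neg_eq_zero.mp hb₀])).1

theorem sq_add_sq_ne_zero_of_mul_add_mul_eq_zero {R : Type*} [CommRing R] [IsDomain R]
    {a₀ b₀ a₁ b₁ : R} (hD : a₁ * b₀ - a₀ * b₁ ≠ 0) (hθ : a₀ * a₁ + b₀ * b₁ = 0) :
    a₀ ^ 2 + b₀ ^ 2 ≠ 0 := by
  intro hs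
  have ha₀D : a₀ * (a₁ * b₀ - a₀ * b₁) = 0 := by linear_combination b₀ * hθ - b₁ * hs
  have hb₀D : b₀ * (a₁ * b₀ - a₀ * b₁) = 0 := by linear_combination a₁ * hs - a₀ * hθ
  have ha₀ : a₀ = 0 := (mul_eq_zero.mp ha₀D).resolve_right hD
  have hb₀ : b₀ = 0 := (mul_eq_zero.mp hb₀D).resolve_right hD
  exact hD (by simp [ha₀, hb₀])

theorem eq_mul_of_mul_add_mul_eq_zero {K : Type*} [Field K] {a₀ b₀ a₁ b₁ : K}
    (hs : a₀ ^ 2 + b₀ ^ 2 ≠ 0) (hθ : a₀ * a₁ + b₀ * b₁ = 0) :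
    let k := (a₁ * b₀ - a₀ * b₁) / (a₀ ^ 2 + b₀ ^ 2)
    a₁ = k * b₀ ∧ b₁ = -k * a₀ := by
  refine ⟨?_, ?_⟩
  · field_simp; linear_combination a₀ * hθ
  · field_simp; linear_combination b₀ * hθ

def normalizingMatrix {R : Type*} [CommRing R] (c a b : R) : Matrix (Fin 2) (Fin 2) R :=
  c • !![a + b, b - a; a - b, a + b]

section normalizingMatrix

variable {R : Type*} [CommRing R] (c a b : R)

theorem normalizingMatrix_transpose_mul_self :
    (normalizingMatrix c a b)ᵀ * normalizingMatrix c a b =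
      (c ^ 2 * (2 * (a ^ 2 + b ^ 2))) • (1 : Matrix (Fin 2) (Fin 2) R) := by
  ext i j
  fin_cases i <;> fin_cases j <;>
    simp [normalizingMatrix, Matrix.mul_apply, Fin.sum_univ_two] <;> ring

theorem normalizingMatrix_mulVec_self :
    (normalizingMatrix c a b) *ᵥ ![a, b] = ![c * (a ^ 2 + b ^ 2), c * (a ^ 2 + b ^ 2)] := by
  ext i
  fin_cases i <;> simp [normalizingMatrix, Matrix.mulVec, dotProduct, Fin.sum_univ_two] <;> ring

theorem normalizingMatrix_mulVec_rot (k : R) :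
    (normalizingMatrix c a b) *ᵥ ![k * b, -k * a] =
      ![k * (c * (a ^ 2 + b ^ 2)), -(k * (c * (a ^ 2 + b ^ 2)))] := by
  ext i
  fin_cases i <;> simp [normalizingMatrix, Matrix.mulVec, dotProduct, Fin.sum_univ_two] <;> ring

end normalizingMatrix

theorem pow_sub_mul_pow_add_pow_sub_mul_neg_pow {R : Type*} [CommRing R] (μ k : R) {n j : ℕ}
    (hj : j ≤ n) :
    μ ^ (n - j) * μ ^ j + (k * μ) ^ (n - j) * (-(k * μ)) ^ j = μ ^ n * (1 + k ^ n * (-1) ^ j) := by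
  rw [neg_pow, ← pow_add, mul_left_comm, ← pow_add, Nat.sub_add_cancel hj, mul_pow]
  ring

theorem stmt_13 (n : ℕ) (a₀ b₀ a₁ b₁ : ℂ)
    (hli : LinearIndependent ℂ ![(a₀, b₀), (a₁, b₁)])
    (hθ : a₀ * a₁ + b₀ * b₁ = 0) :
    ∃ (H : Matrix (Fin 2) (Fin 2) ℂ) (k lam : ℂ),
      H.transpose * H = 1 ∧ k ≠ 0 ∧ a₁ = k * b₀ ∧ b₁ = -k * a₀ ∧ lam ≠ 0 ∧
      ∀ j ≤ n,
        H.mulVec ![a₀, b₀] 0 ^ (n - j) * H.mulVec ![a₀, b₀] 1 ^ j +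
          H.mulVec ![a₁, b₁] 0 ^ (n - j) * H.mulVec ![a₁, b₁] 1 ^ j =
        lam * (1 + k ^ n * (-1) ^ j) := by
  have hD := hli.pair_prod_det_ne_zero
  have hs := sq_add_sq_ne_zero_of_mul_add_mul_eq_zero hD hθ
  obtain ⟨hk₁, hk₂⟩ := eq_mul_of_mul_add_mul_eq_zero hs hθ
  set k := (a₁ * b₀ - a₀ * b₁) / (a₀ ^ 2 + b₀ ^ 2)
  obtain ⟨c, hc⟩ := IsAlgClosed.exists_pow_nat_eq (2 * (a₀ ^ 2 + b₀ ^ 2))⁻¹ two_pos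
  have hc₀ : c ≠ 0 := by rintro rfl; simp [hs] at hc
  refine ⟨normalizingMatrix c a₀ b₀, k, (c * (a₀ ^ 2 + b₀ ^ 2)) ^ n, ?_, div_ne_zero hD hs,
    hk₁, hk₂, pow_ne_zero _ (mul_ne_zero hc₀ hs), fun j hj => ?_⟩
  · rw [normalizingMatrix_transpose_mul_self, hc, inv_mul_cancel₀ (by simpa), one_smul]
  · rw [hk₁, hk₂, normalizingMatrix_mulVec_self, normalizingMatrix_mulVec_rot]
    exact pow_sub_mul_pow_add_pow_sub_mul_neg_pow _ _ hj
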